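/- Let p : H → M be an open compact group bundle over a compact Hausdorff space M and f ∈ C(H). Then the map M → [0,∞), m ↦ ‖f|_{H_m}‖_{C*(H_m)}, assigning to m the norm of the restriction of f in the group C*-algebra of the compact fiber group H_m, is lower semicontinuous. -/

import Mathlib

/-!
Rescaling a pair `(h, k)` admissible at `m₀` by `(max 1 ‖h‖²_{L²(λ_m)})⁻¹` and
`(max 1 ‖k‖²_{L²(λ_m)})⁻¹` gives admissible pairs at every `m`, with values depending
continuously on `m`; so the supremum is lower semicontinuous as soon as
`m ↦ ∬ K dλ_m dλ_m` is continuous for `K ∈ C(H × H)`. By Ascoli this reduces to continuity of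
`m ↦ ∫ g dλ_m`. Let `G ∈ C(H × H)` extend `(x, y) ↦ g(xy)`. By left invariance
`∫ G(x, ·) dλ_m = ∫ g dλ_m` for `x ∈ H_m`, and as `p` is open every point of `H_{m₀}` is
approximated by points of `H_m`, so `∬ G dλ_m dλ_{m₀} ≈ ∫ g dλ_m`. In the other order,
`y ↦ ∫ G(·, y) dλ_{m₀}` equals `∫ g dλ_{m₀}` on `H_{m₀}` by right invariance (which follows
from left invariance and Fubini through inversion invariance), hence stays close to it on `H_m`
for `m` near `m₀`, as `p` is closed.
-/

open scoped Classical

open MeasureTheory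

/-- A compact group bundle: a continuous surjection `proj : H → M` between compact
Hausdorff spaces such that each fiber `H_m = proj⁻¹({m})` is a group, with continuous
multiplication (on the fiber product, encoded as a total map `mul` whose axioms are only
imposed on pairs in the same fiber), continuous inversion and a continuous unit
section. -/
structure CompactGroupBundle (H M : Type*) [TopologicalSpace H] [TopologicalSpace M]
    where
  proj : H → M
  continuous_proj : Continuous proj
  surjective_proj : Function.Surjective proj
  mul : H → H → H
  proj_mul : ∀ x y, proj x = proj y → proj (mul x y) = proj x
  continuousOn_mul :
    ContinuousOn (fun xy : H × H => mul xy.1 xy.2) {xy | proj xy.1 = proj xy.2}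
  inv : H → H
  continuous_inv : Continuous inv
  proj_inv : ∀ x, proj (inv x) = proj x
  one : M → H
  continuous_one : Continuous one
  proj_one : ∀ m, proj (one m) = m
  mul_assoc' : ∀ x y z, proj x = proj y → proj y = proj z →
    mul (mul x y) z = mul x (mul y z)
  one_mul' : ∀ x, mul (one (proj x)) x = x
  mul_one' : ∀ x, mul x (one (proj x)) = x
  inv_mul_cancel' : ∀ x, mul (inv x) x = one (proj x)

open Filter Topology

theorem dist_integral_le_of_ae_dist_le {X E : Type*} [MeasurableSpace X] [NormedAddCommGroup E]
    [NormedSpace ℝ E] [CompleteSpace E] (μ : Measure X) [IsProbabilityMeasure μ] {f : X → E}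
    (hf : Integrable f μ) {a : E} {δ : ℝ} (h : ∀ᵐ x ∂μ, dist a (f x) ≤ δ) :
    dist a (∫ x, f x ∂μ) ≤ δ := by
  rw [dist_eq_norm]
  calc ‖a - ∫ x, f x ∂μ‖ = ‖∫ x, (a - f x) ∂μ‖ := by
        rw [integral_sub (integrable_const a) hf, integral_const, probReal_univ, one_smul]
    _ ≤ δ := by
        simpa using norm_integral_le_of_norm_le_const (μ := μ)
          (h.mono fun x hx => (dist_eq_norm a (f x)).symm.le.trans hx)

section ContinuousIntegrals

variable {X E : Type*} [TopologicalSpace X] [CompactSpace X] [MeasurableSpace X]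
  [OpensMeasurableSpace X] [NormedAddCommGroup E]

theorem Continuous.integrable_of_compactSpace {u : X → E} (hu : Continuous u) (μ : Measure X)
    [IsFiniteMeasure μ] : Integrable u μ :=
  hu.integrable_of_hasCompactSupport (.of_compactSpace _)

variable [NormedSpace ℝ E]

theorem ContinuousMap.dist_integral_le (μ : Measure X) [IsProbabilityMeasure μ]
    (u v : C(X, E)) : dist (∫ x, u x ∂μ) (∫ x, v x ∂μ) ≤ dist u v := by
  rw [dist_eq_norm, ← integral_sub (u.continuous.integrable_of_compactSpace μ)
    (v.continuous.integrable_of_compactSpace μ)]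
  simpa using norm_integral_le_of_norm_le_const (μ := μ) (.of_forall fun x => by
    rw [← dist_eq_norm]; exact ContinuousMap.dist_apply_le_dist (f := u) (g := v) x)

theorem ContinuousMap.lipschitzWith_integral (μ : Measure X) [IsProbabilityMeasure μ] :
    LipschitzWith 1 fun u : C(X, E) => ∫ x, u x ∂μ :=
  .of_dist_le_mul fun u v => by simpa using u.dist_integral_le μ v

theorem ContinuousMap.continuous_parametric_integral {Y : Type*} [TopologicalSpace Y]
    (K : C(Y × X, E)) (μ : Measure X) [IsProbabilityMeasure μ] :
    Continuous fun y => ∫ x, K (y, x) ∂μ :=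
  (ContinuousMap.lipschitzWith_integral μ).continuous.comp K.curry.continuous

theorem tendsto_integral_integral_of_tendsto_integral {ι : Type*} {l : Filter ι}
    {μ : ι → Measure X} [∀ i, IsProbabilityMeasure (μ i)] {μ₀ : Measure X}
    [IsProbabilityMeasure μ₀]
    (hμ : ∀ g : C(X, E), Tendsto (fun i => ∫ x, g x ∂μ i) l (𝓝 (∫ x, g x ∂μ₀)))
    (K : C(X × X, E)) :
    Tendsto (fun i => ∫ x, ∫ y, K (x, y) ∂μ i ∂μ i) l (𝓝 (∫ x, ∫ y, K (x, y) ∂μ₀ ∂μ₀)) := by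
  let q (ν : Measure X) [IsProbabilityMeasure ν] : C(X, E) :=
    ⟨fun x => ∫ y, K (x, y) ∂ν, K.continuous_parametric_integral ν⟩
  -- Pointwise convergence of the 1-Lipschitz functionals `∫ · ∂μ i` is uniform on the
  -- compact set of slices `K (x, ·)` (Ascoli).
  have hq : Tendsto (fun i => q (μ i)) l (𝓝 (q μ₀)) := by
    let S := Set.range K.curry
    have : CompactSpace S := isCompact_iff_compactSpace.mp (isCompact_range K.curry.continuous)
    let F (ν : Measure X) (s : S) : E := ∫ y, (s : C(X, E)) y ∂ν
    have hequi : Equicontinuous fun i => F (μ i) :=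
      (LipschitzWith.uniformEquicontinuous _ 1 fun i => by
        have : LipschitzWith (1 * 1) (F (μ i)) :=
          (ContinuousMap.lipschitzWith_integral (μ i)).comp (LipschitzWith.subtype_val S)
        rwa [mul_one] at this).equicontinuous
    have hunif := UniformFun.tendsto_iff_tendstoUniformly.mp
      ((hequi.tendsto_uniformFun_iff_pi l (F μ₀)).mpr (tendsto_pi_nhds.mpr fun s => hμ s))
    exact ContinuousMap.tendsto_iff_tendstoUniformly.mpr
      (hunif.comp fun x => ⟨K.curry x, x, rfl⟩)
  refine (hμ (q μ₀)).congr_dist (squeeze_zero (fun _ => dist_nonneg)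
    (fun i => (q μ₀).dist_integral_le (μ i) (q (μ i))) ?_)
  simpa [dist_comm] using tendsto_iff_dist_tendsto_zero.mp hq

end ContinuousIntegrals

section L2Normalization

variable {X : Type*} [MeasurableSpace X]

theorem integral_norm_le_one_of_integral_norm_sq_le_one {E : Type*} [NormedAddCommGroup E]
    (μ : Measure X) [IsProbabilityMeasure μ] {u : X → E}
    (hu : Integrable (fun x => ‖u x‖ ^ 2) μ) (h : ∫ x, ‖u x‖ ^ 2 ∂μ ≤ 1) :
    ∫ x, ‖u x‖ ∂μ ≤ 1 := by
  calc ∫ x, ‖u x‖ ∂μ ≤ ∫ x, (1 + ‖u x‖ ^ 2) / 2 ∂μ :=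
        integral_mono_of_nonneg (.of_forall fun x => norm_nonneg _)
          (((integrable_const 1).add hu).div_const 2)
          (.of_forall fun x => by nlinarith [sq_nonneg (‖u x‖ - 1)])
    _ = (1 + ∫ x, ‖u x‖ ^ 2 ∂μ) / 2 := by
        rw [integral_div, integral_add (integrable_const 1) hu, integral_const, probReal_univ,
          one_smul]
    _ ≤ 1 := by linarith

noncomputable def l2Normalizer (μ : Measure X) {E : Type*} [NormedAddCommGroup E] (u : X → E) :
    ℝ :=
  (max 1 (∫ x, ‖u x‖ ^ 2 ∂μ))⁻¹

theorem l2Normalizer_nonneg (μ : Measure X) {E : Type*} [NormedAddCommGroup E] (u : X → E) :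
    0 ≤ l2Normalizer μ u :=
  inv_nonneg.mpr (zero_le_one.trans (le_max_left _ _))

theorem l2Normalizer_eq_one (μ : Measure X) {E : Type*} [NormedAddCommGroup E] {u : X → E}
    (h : ∫ x, ‖u x‖ ^ 2 ∂μ ≤ 1) : l2Normalizer μ u = 1 := by
  simp [l2Normalizer, max_eq_left h]

theorem integral_norm_sq_l2Normalizer_smul_le_one (μ : Measure X) {E : Type*}
    [NormedAddCommGroup E] [NormedSpace ℝ E] (u : X → E) :
    ∫ x, ‖l2Normalizer μ u • u x‖ ^ 2 ∂μ ≤ 1 := by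
  set t := max 1 (∫ x, ‖u x‖ ^ 2 ∂μ)
  have ht : 1 ≤ t := le_max_left _ _
  have hN : ∫ x, ‖u x‖ ^ 2 ∂μ ≤ t := le_max_right _ _
  simp only [l2Normalizer, norm_smul, mul_pow, Real.norm_eq_abs, sq_abs, integral_const_mul]
  rw [inv_pow, inv_mul_le_iff₀ (by positivity)]
  nlinarith

end L2Normalization

theorem IsOpenMap.eventually_forall_exists_dist_lt {X Y Z : Type*} [TopologicalSpace X]
    [TopologicalSpace Y] [PseudoMetricSpace Z] {p : X → Y} (hp : IsOpenMap p) {Ψ : X → Z}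
    (hΨ : Continuous Ψ) {y₀ : Y} (hK : IsCompact (p ⁻¹' {y₀})) {ε : ℝ} (hε : 0 < ε) :
    ∀ᶠ y in 𝓝 y₀, ∀ x ∈ p ⁻¹' {y₀}, ∃ x', p x' = y ∧ dist (Ψ x) (Ψ x') < ε := by
  refine hK.eventually_forall_of_forall_eventually fun x₀ hx₀ => ?_
  have hU : Ψ ⁻¹' Metric.ball (Ψ x₀) (ε / 2) ∈ 𝓝 x₀ :=
    hΨ.continuousAt.preimage_mem_nhds (Metric.ball_mem_nhds _ (half_pos hε))
  have hpU : p '' (Ψ ⁻¹' Metric.ball (Ψ x₀) (ε / 2)) ∈ 𝓝 y₀ := hx₀ ▸ hp.image_mem_nhds hU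
  filter_upwards [prod_mem_nhds hpU hU] with ⟨y, x⟩ ⟨⟨x', hx', hx'y⟩, hx⟩
  refine ⟨x', hx'y, ?_⟩
  calc dist (Ψ x) (Ψ x') ≤ dist (Ψ x) (Ψ x₀) + dist (Ψ x') (Ψ x₀) := dist_triangle_right _ _ _
    _ < ε / 2 + ε / 2 := add_lt_add hx hx'
    _ = ε := add_halves ε

theorem lowerSemicontinuous_sSup_of_forall_exists_continuousAt {X : Type*} [TopologicalSpace X]
    {S : X → Set ℝ} (hbdd : ∀ x, BddAbove (S x)) (hne : ∀ x, (S x).Nonempty)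
    (hsel : ∀ x₀, ∀ r ∈ S x₀,
      ∃ φ : X → ℝ, ContinuousAt φ x₀ ∧ φ x₀ = r ∧ ∀ᶠ x in 𝓝 x₀, φ x ∈ S x) :
    LowerSemicontinuous fun x => sSup (S x) := by
  intro x₀ r hr
  obtain ⟨r', hr', hrr'⟩ := exists_lt_of_lt_csSup (hne x₀) hr
  obtain ⟨φ, hφ, rfl, hφS⟩ := hsel x₀ r' hr'
  filter_upwards [hφ.eventually (lt_mem_nhds hrr'), hφS] with x hlt hmem
  exact hlt.trans_le (le_csSup (hbdd x) hmem)

namespace CompactGroupBundle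

section Fibers

variable {H M : Type*} [TopologicalSpace H] [TopologicalSpace M] (B : CompactGroupBundle H M)

def Fiber (m : M) : Type _ := {x : H // B.proj x = m}

instance (m : M) : Mul (B.Fiber m) :=
  ⟨fun x y => ⟨B.mul x.1 y.1, (B.proj_mul _ _ (x.2.trans y.2.symm)).trans x.2⟩⟩

instance (m : M) : Inv (B.Fiber m) := ⟨fun x => ⟨B.inv x.1, (B.proj_inv _).trans x.2⟩⟩

instance (m : M) : One (B.Fiber m) := ⟨⟨B.one m, B.proj_one m⟩⟩

instance (m : M) : Group (B.Fiber m) :=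
  Group.ofLeftAxioms
    (fun x y z => Subtype.ext (B.mul_assoc' _ _ _ (x.2.trans y.2.symm) (y.2.trans z.2.symm)))
    (fun ⟨x, hx⟩ => Subtype.ext (hx ▸ B.one_mul' x))
    (fun ⟨x, hx⟩ => Subtype.ext (hx ▸ B.inv_mul_cancel' x))

theorem inv_mul_eq_inv_inv_mul {x y : H} (hxy : B.proj x = B.proj y) :
    B.mul (B.inv x) y = B.inv (B.mul (B.inv y) x) := by
  let a : B.Fiber (B.proj y) := ⟨x, hxy⟩
  let b : B.Fiber (B.proj y) := ⟨y, rfl⟩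
  exact congrArg Subtype.val (show a⁻¹ * b = (b⁻¹ * a)⁻¹ by group)

def fiberProd : Set (H × H) := {p | B.proj p.1 = B.proj p.2}

theorem isClosed_fiberProd [T2Space M] : IsClosed B.fiberProd :=
  isClosed_eq (B.continuous_proj.comp continuous_fst) (B.continuous_proj.comp continuous_snd)

theorem continuousOn_inv_mul :
    ContinuousOn (fun p : H × H => B.mul (B.inv p.1) p.2) B.fiberProd :=
  B.continuousOn_mul.comp
    ((B.continuous_inv.comp continuous_fst).prodMk continuous_snd).continuousOn
    fun p hp => (B.proj_inv p.1).trans hp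

theorem exists_continuousMap_eqOn_fiberProd [CompactSpace H] [T2Space H] [T2Space M]
    {φ : H × H → ℂ} (hφ : ContinuousOn φ B.fiberProd) :
    ∃ G : C(H × H, ℂ), Set.EqOn G φ B.fiberProd := by
  obtain ⟨G, hG⟩ := ContinuousMap.exists_restrict_eq B.isClosed_fiberProd ⟨_, hφ.domRestrict⟩
  exact ⟨G, fun p hp => DFunLike.congr_fun hG ⟨p, hp⟩⟩

end Fibers

section HaarSystem

variable {H M : Type*} [TopologicalSpace H] [TopologicalSpace M]
  [MeasurableSpace H] [MeasurableSpace M] (B : CompactGroupBundle H M)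

structure IsHaarSystem (lam : M → ProbabilityMeasure H) : Prop where
  map_proj : ∀ m : M, ((lam m : Measure H)).map B.proj = Measure.dirac m
  map_mul_left : ∀ x : H,
    ((lam (B.proj x) : Measure H)).map
        (fun y => if B.proj y = B.proj x then B.mul x y else y) =
      (lam (B.proj x) : Measure H)

variable {B} {lam : M → ProbabilityMeasure H}

namespace IsHaarSystem

variable [OpensMeasurableSpace H] [T2Space M] [BorelSpace M]

theorem ae_proj_eq (hlam : B.IsHaarSystem lam) (m : M) :
    ∀ᵐ y ∂(lam m : Measure H), B.proj y = m := by
  have : ∀ᵐ z ∂(lam m : Measure H).map B.proj, z = m := by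
    rw [hlam.map_proj m, ae_dirac_eq]; exact Filter.eventually_pure.mpr rfl
  exact ae_of_ae_map B.continuous_proj.measurable.aemeasurable this

theorem integral_comp_mul_left (hlam : B.IsHaarSystem lam) {x : H} {m : M} (hx : B.proj x = m)
    {E : Type*} [NormedAddCommGroup E] [NormedSpace ℝ E] {φ : H → E}
    (hφ : AEStronglyMeasurable φ (lam m : Measure H)) :
    ∫ y, φ (B.mul x y) ∂(lam m : Measure H) = ∫ y, φ y ∂(lam m : Measure H) := by
  subst hx
  set τ := fun y => if B.proj y = B.proj x then B.mul x y else y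
  have hmap := hlam.map_mul_left x
  -- `τ` is a.e.-measurable, since otherwise its push-forward would be the zero measure.
  have hτ : AEMeasurable τ (lam (B.proj x) : Measure H) := by
    by_contra h
    rw [Measure.map_of_not_aemeasurable h] at hmap
    exact IsProbabilityMeasure.ne_zero _ hmap.symm
  calc ∫ y, φ (B.mul x y) ∂(lam (B.proj x) : Measure H)
      = ∫ y, φ (τ y) ∂(lam (B.proj x) : Measure H) := by
        refine integral_congr_ae ?_
        filter_upwards [hlam.ae_proj_eq (B.proj x)] with y hy
        simp [τ, hy]
    _ = ∫ y, φ y ∂((lam (B.proj x) : Measure H).map τ) :=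
        (integral_map hτ (by rwa [hmap])).symm
    _ = ∫ y, φ y ∂(lam (B.proj x) : Measure H) := by rw [hmap]

theorem integral_integral_congr (hlam : B.IsHaarSystem lam) (m : M) {E : Type*}
    [NormedAddCommGroup E] [NormedSpace ℝ E] {φ ψ : H → H → E}
    (h : ∀ x y, B.proj x = B.proj y → φ x y = ψ x y) :
    ∫ x, ∫ y, φ x y ∂(lam m : Measure H) ∂(lam m : Measure H) =
      ∫ x, ∫ y, ψ x y ∂(lam m : Measure H) ∂(lam m : Measure H) := by
  refine integral_congr_ae ?_
  filter_upwards [hlam.ae_proj_eq m] with x hx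
  refine integral_congr_ae ?_
  filter_upwards [hlam.ae_proj_eq m] with y hy
  exact h x y (hx.trans hy.symm)

theorem integral_integral_swap_of_continuousOn [CompactSpace H] [T2Space H]
    (hlam : B.IsHaarSystem lam) (m : M)
    {φ : H → H → ℂ} (hφ : ContinuousOn (Function.uncurry φ) B.fiberProd) :
    ∫ x, ∫ y, φ x y ∂(lam m : Measure H) ∂(lam m : Measure H) =
      ∫ y, ∫ x, φ x y ∂(lam m : Measure H) ∂(lam m : Measure H) := by
  obtain ⟨G, hG⟩ := B.exists_continuousMap_eqOn_fiberProd hφ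
  rw [hlam.integral_integral_congr m (φ := φ) (ψ := fun x y => G (x, y))
      fun x y h => (hG (show (x, y) ∈ B.fiberProd from h)).symm,
    hlam.integral_integral_congr m (φ := fun y x => φ x y) (ψ := fun y x => G (x, y))
      fun y x h => (hG (show (x, y) ∈ B.fiberProd from h.symm)).symm]
  exact integral_integral_swap_of_hasCompactSupport (f := fun x y => G (x, y)) G.continuous
    (.of_compactSpace _)

theorem integral_comp_inv [CompactSpace H] [T2Space H] (hlam : B.IsHaarSystem lam) (m : M)
    (g : C(H, ℂ)) : ∫ x, g (B.inv x) ∂(lam m : Measure H) = ∫ x, g x ∂(lam m : Measure H) := by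
  have hrow : ∀ᵐ x ∂(lam m : Measure H),
      ∫ y, g (B.mul (B.inv x) y) ∂(lam m : Measure H) = ∫ y, g y ∂(lam m : Measure H) := by
    filter_upwards [hlam.ae_proj_eq m] with x hx
    exact hlam.integral_comp_mul_left ((B.proj_inv x).trans hx) g.continuous.aestronglyMeasurable
  have hcol : ∀ᵐ y ∂(lam m : Measure H),
      ∫ x, g (B.mul (B.inv x) y) ∂(lam m : Measure H) = ∫ x, g (B.inv x) ∂(lam m : Measure H) := by
    filter_upwards [hlam.ae_proj_eq m] with y hy
    calc ∫ x, g (B.mul (B.inv x) y) ∂(lam m : Measure H)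
        = ∫ x, g (B.inv (B.mul (B.inv y) x)) ∂(lam m : Measure H) := by
          refine integral_congr_ae ?_
          filter_upwards [hlam.ae_proj_eq m] with x hx
          rw [B.inv_mul_eq_inv_inv_mul (hx.trans hy.symm)]
      _ = ∫ x, g (B.inv x) ∂(lam m : Measure H) :=
          hlam.integral_comp_mul_left (φ := fun z => g (B.inv z)) ((B.proj_inv y).trans hy)
            (g.continuous.comp B.continuous_inv).aestronglyMeasurable
  have hswap := hlam.integral_integral_swap_of_continuousOn m
    (φ := fun x y => g (B.mul (B.inv x) y))
    (g.continuous.comp_continuousOn B.continuousOn_inv_mul)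
  rw [integral_congr_ae hrow, integral_congr_ae hcol] at hswap
  simpa using hswap.symm

theorem integral_comp_mul_right [CompactSpace H] [T2Space H] (hlam : B.IsHaarSystem lam)
    {y : H} {m : M} (hy : B.proj y = m) (g : C(H, ℂ)) :
    ∫ x, g (B.mul x y) ∂(lam m : Measure H) = ∫ x, g x ∂(lam m : Measure H) := by
  obtain ⟨G, hG⟩ := B.exists_continuousMap_eqOn_fiberProd
    (g.continuous.comp_continuousOn B.continuousOn_mul)
  calc ∫ x, g (B.mul x y) ∂(lam m : Measure H)
      = ∫ x, G (x, y) ∂(lam m : Measure H) := by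
        refine integral_congr_ae ?_
        filter_upwards [hlam.ae_proj_eq m] with x hx
        exact (hG (show (x, y) ∈ B.fiberProd from hx.trans hy.symm)).symm
    _ = ∫ x, G (B.inv x, y) ∂(lam m : Measure H) :=
        (hlam.integral_comp_inv m (G.comp ⟨fun x => (x, y), by fun_prop⟩)).symm
    _ = ∫ x, g (B.inv (B.mul (B.inv y) x)) ∂(lam m : Measure H) := by
        refine integral_congr_ae ?_
        filter_upwards [hlam.ae_proj_eq m] with x hx
        have hxy : B.proj x = B.proj y := hx.trans hy.symm
        rw [hG (show (B.inv x, y) ∈ B.fiberProd from (B.proj_inv x).trans hxy)]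
        exact congrArg g (B.inv_mul_eq_inv_inv_mul hxy)
    _ = ∫ x, g (B.inv x) ∂(lam m : Measure H) :=
        hlam.integral_comp_mul_left (φ := fun z => g (B.inv z)) ((B.proj_inv y).trans hy)
          (g.continuous.comp B.continuous_inv).aestronglyMeasurable
    _ = ∫ x, g x ∂(lam m : Measure H) := hlam.integral_comp_inv m g

section MulExtension

variable {g : C(H, ℂ)} {G : C(H × H, ℂ)}

theorem integral_slice_left (hlam : B.IsHaarSystem lam)
    (hG : Set.EqOn G (fun p => g (B.mul p.1 p.2)) B.fiberProd) {x : H} {m : M} (hx : B.proj x = m) :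
    ∫ y, G (x, y) ∂(lam m : Measure H) = ∫ y, g y ∂(lam m : Measure H) := by
  refine (integral_congr_ae ?_).trans
    (hlam.integral_comp_mul_left hx g.continuous.aestronglyMeasurable)
  filter_upwards [hlam.ae_proj_eq m] with y hy
  exact hG (show (x, y) ∈ B.fiberProd from hx.trans hy.symm)

theorem integral_slice_right [CompactSpace H] [T2Space H] (hlam : B.IsHaarSystem lam)
    (hG : Set.EqOn G (fun p => g (B.mul p.1 p.2)) B.fiberProd) {y : H} {m : M} (hy : B.proj y = m) :
    ∫ x, G (x, y) ∂(lam m : Measure H) = ∫ x, g x ∂(lam m : Measure H) := by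
  refine (integral_congr_ae ?_).trans (hlam.integral_comp_mul_right hy g)
  filter_upwards [hlam.ae_proj_eq m] with x hx
  exact hG (show (x, y) ∈ B.fiberProd from hx.trans hy.symm)

theorem tendsto_integral_integral_sub_integral [CompactSpace H] (hlam : B.IsHaarSystem lam)
    (hG : Set.EqOn G (fun p => g (B.mul p.1 p.2)) B.fiberProd)
    (hopen : IsOpenMap B.proj) (m₀ : M) :
    Tendsto (fun m => ∫ x, ∫ y, G (x, y) ∂(lam m : Measure H) ∂(lam m₀ : Measure H) -
      ∫ x, g x ∂(lam m : Measure H)) (𝓝 m₀) (𝓝 0) := by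
  refine Metric.tendsto_nhds.mpr fun ε hε => ?_
  filter_upwards [hopen.eventually_forall_exists_dist_lt G.curry.continuous
    ((isClosed_singleton (x := m₀)).preimage B.continuous_proj).isCompact (half_pos hε)]
    with m hm
  rw [dist_zero_right, ← dist_eq_norm, dist_comm]
  refine (dist_integral_le_of_ae_dist_le _
    ((G.continuous_parametric_integral _).integrable_of_compactSpace _) ?_).trans_lt
    (half_lt_self hε)
  filter_upwards [hlam.ae_proj_eq m₀] with x hx
  obtain ⟨x', hx', hxx'⟩ := hm x hx
  rw [← hlam.integral_slice_left hG hx', dist_comm]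
  exact ((G.curry x).dist_integral_le _ (G.curry x')).trans hxx'.le

theorem tendsto_integral_integral [CompactSpace H] [T2Space H] (hlam : B.IsHaarSystem lam)
    (hG : Set.EqOn G (fun p => g (B.mul p.1 p.2)) B.fiberProd) (m₀ : M) :
    Tendsto (fun m => ∫ x, ∫ y, G (x, y) ∂(lam m : Measure H) ∂(lam m₀ : Measure H))
      (𝓝 m₀) (𝓝 (∫ x, g x ∂(lam m₀ : Measure H))) := by
  let E : C(H, ℂ) := ⟨fun y => ∫ x, G (x, y) ∂(lam m₀ : Measure H),
    (G.comp ⟨Prod.swap, continuous_swap⟩).continuous_parametric_integral _⟩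
  have hswap : ∀ m, ∫ x, ∫ y, G (x, y) ∂(lam m : Measure H) ∂(lam m₀ : Measure H) =
      ∫ y, E y ∂(lam m : Measure H) := fun m =>
    integral_integral_swap_of_hasCompactSupport (f := fun x y => G (x, y)) G.continuous
      (.of_compactSpace _)
  simp_rw [hswap]
  refine Metric.tendsto_nhds.mpr fun ε hε => ?_
  have hfiber : ∀ y ∈ B.proj ⁻¹' {m₀},
      ∀ᶠ z in 𝓝 y, dist (∫ x, g x ∂(lam m₀ : Measure H)) (E z) < ε / 2 := fun y hy =>
    (continuous_const.dist E.continuous).continuousAt.eventually_lt continuousAt_const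
      (by rw [show E y = _ from hlam.integral_slice_right hG hy, dist_self]; positivity)
  filter_upwards [B.continuous_proj.isClosedMap.eventually_nhds_fiber m₀ hfiber] with m hm
  rw [dist_comm]
  refine (dist_integral_le_of_ae_dist_le _ (E.continuous.integrable_of_compactSpace _) ?_).trans_lt
    (half_lt_self hε)
  filter_upwards [hlam.ae_proj_eq m] with y hy
  exact (hm y hy).le

end MulExtension

theorem continuous_integral [CompactSpace H] [T2Space H] (hlam : B.IsHaarSystem lam)
    (hopen : IsOpenMap B.proj) (g : C(H, ℂ)) :
    Continuous fun m => ∫ x, g x ∂(lam m : Measure H) := by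
  obtain ⟨G, hG⟩ := B.exists_continuousMap_eqOn_fiberProd
    (g.continuous.comp_continuousOn B.continuousOn_mul)
  refine continuous_iff_continuousAt.mpr fun m₀ => ?_
  simpa [ContinuousAt] using (hlam.tendsto_integral_integral hG m₀).sub
    (hlam.tendsto_integral_integral_sub_integral hG hopen m₀)

theorem continuous_integral_integral [CompactSpace H] [T2Space H] (hlam : B.IsHaarSystem lam)
    (hopen : IsOpenMap B.proj) (K : C(H × H, ℂ)) :
    Continuous fun m => ∫ x, ∫ y, K (x, y) ∂(lam m : Measure H) ∂(lam m : Measure H) :=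
  continuous_iff_continuousAt.mpr fun _ => tendsto_integral_integral_of_tendsto_integral
    (fun g => (hlam.continuous_integral hopen g).continuousAt) K

end IsHaarSystem

end HaarSystem

section Pairing

variable {H M : Type*} [TopologicalSpace H] [TopologicalSpace M] [MeasurableSpace H]
  (B : CompactGroupBundle H M) (lam : M → ProbabilityMeasure H)

noncomputable def pairing (f h k : C(H, ℂ)) (m : M) : ℂ :=
  ∫ x, (∫ y, (if B.proj x = B.proj y then h x * f (B.mul (B.inv x) y) * k y else 0)
    ∂(lam m : Measure H)) ∂(lam m : Measure H)

theorem norm_pairing_smul_smul (f h k : C(H, ℂ)) {a b : ℝ} (ha : 0 ≤ a) (hb : 0 ≤ b) (m : M) :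
    ‖B.pairing lam f (a • h) (b • k) m‖ = a * b * ‖B.pairing lam f h k m‖ := by
  have hpt : ∀ x y, (if B.proj x = B.proj y then (a • h) x * f (B.mul (B.inv x) y) * (b • k) y
      else 0) = ((a * b : ℝ) : ℂ) *
        (if B.proj x = B.proj y then h x * f (B.mul (B.inv x) y) * k y else 0) := by
    intro x y
    split_ifs
    · simp only [ContinuousMap.smul_apply, Complex.real_smul, Complex.ofReal_mul]; ring
    · rw [mul_zero]
  simp only [pairing, hpt, integral_const_mul]
  rw [norm_mul, Complex.norm_real, Real.norm_of_nonneg (mul_nonneg ha hb)]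

theorem norm_pairing_le [CompactSpace H] [OpensMeasurableSpace H] (f : C(H, ℂ)) {h k : C(H, ℂ)}
    {m : M} (hh : ∫ x, ‖h x‖ ^ 2 ∂(lam m : Measure H) ≤ 1)
    (hk : ∫ x, ‖k x‖ ^ 2 ∂(lam m : Measure H) ≤ 1) :
    ‖B.pairing lam f h k m‖ ≤ ‖f‖ := by
  set μ := (lam m : Measure H)
  have hL1 : ∀ u : C(H, ℂ), ∫ x, ‖u x‖ ^ 2 ∂μ ≤ 1 → ∫ x, ‖u x‖ ∂μ ≤ 1 := fun u hu =>
    integral_norm_le_one_of_integral_norm_sq_le_one μ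
      ((u.continuous.norm.pow 2).integrable_of_compactSpace μ) hu
  have hpt : ∀ x y, ‖if B.proj x = B.proj y then h x * f (B.mul (B.inv x) y) * k y else 0‖ ≤
      ‖h x‖ * ‖f‖ * ‖k y‖ := by
    intro x y
    split_ifs
    · simp only [norm_mul]; gcongr; exact f.norm_coe_le_norm _
    · rw [norm_zero]; positivity
  have hrow : ∀ x, ‖∫ y, (if B.proj x = B.proj y then h x * f (B.mul (B.inv x) y) * k y else 0)
      ∂μ‖ ≤ ‖h x‖ * ‖f‖ * ∫ y, ‖k y‖ ∂μ := fun x => by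
    rw [← integral_const_mul]
    exact norm_integral_le_of_norm_le
      ((k.continuous.norm.integrable_of_compactSpace μ).const_mul _) (.of_forall (hpt x))
  have hk0 : 0 ≤ ∫ y, ‖k y‖ ∂μ := integral_nonneg fun y => norm_nonneg (k y)
  calc ‖B.pairing lam f h k m‖ ≤ ∫ x, ‖h x‖ * ‖f‖ * ∫ y, ‖k y‖ ∂μ ∂μ :=
        norm_integral_le_of_norm_le
          (((h.continuous.norm.integrable_of_compactSpace μ).mul_const _).mul_const _)
          (.of_forall hrow)
    _ = (∫ x, ‖h x‖ ∂μ) * ‖f‖ * ∫ y, ‖k y‖ ∂μ := by rw [integral_mul_const, integral_mul_const]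
    _ ≤ 1 * ‖f‖ * 1 := by gcongr; exacts [hL1 h hh, hL1 k hk]
    _ = ‖f‖ := by ring

variable {B lam} [MeasurableSpace M] [CompactSpace H] [T2Space H] [OpensMeasurableSpace H]
  [T2Space M] [BorelSpace M]

theorem IsHaarSystem.continuous_pairing (hlam : B.IsHaarSystem lam) (hopen : IsOpenMap B.proj)
    (f h k : C(H, ℂ)) : Continuous (B.pairing lam f h k) := by
  obtain ⟨K, hK⟩ := B.exists_continuousMap_eqOn_fiberProd
    (φ := fun p => h p.1 * f (B.mul (B.inv p.1) p.2) * k p.2)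
    (((h.continuous.comp continuous_fst).continuousOn.mul
      (f.continuous.comp_continuousOn B.continuousOn_inv_mul)).mul
      (k.continuous.comp continuous_snd).continuousOn)
  have hK' : B.pairing lam f h k =
      fun m => ∫ x, ∫ y, K (x, y) ∂(lam m : Measure H) ∂(lam m : Measure H) :=
    funext fun m => hlam.integral_integral_congr m fun x y hxy => by
      rw [if_pos hxy]; exact (hK (show (x, y) ∈ B.fiberProd from hxy)).symm
  rw [hK']
  exact hlam.continuous_integral_integral hopen K

theorem IsHaarSystem.continuous_l2Normalizer (hlam : B.IsHaarSystem lam)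
    (hopen : IsOpenMap B.proj) (u : C(H, ℂ)) :
    Continuous fun m => l2Normalizer (lam m : Measure H) u := by
  have hc := hlam.continuous_integral hopen ⟨fun x => ((‖u x‖ ^ 2 : ℝ) : ℂ), by fun_prop⟩
  have hsq : Continuous fun m => ∫ x, ‖u x‖ ^ 2 ∂(lam m : Measure H) := by
    simpa only [Function.comp_def, ContinuousMap.coe_mk, integral_complex_ofReal,
      Complex.ofReal_re] using Complex.continuous_re.comp hc
  exact (continuous_const.max hsq).inv₀ fun m => (zero_lt_one.trans_le (le_max_left _ _)).ne'

end Pairing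

end CompactGroupBundle

theorem lowerSemicontinuous_fiberwise_CStar_norm_general
    {H M : Type*} [TopologicalSpace H] [CompactSpace H] [T2Space H]
    [MeasurableSpace H] [BorelSpace H]
    [TopologicalSpace M] [T2Space M]
    [MeasurableSpace M] [BorelSpace M]
    (B : CompactGroupBundle H M) (hopen : IsOpenMap B.proj)
    (lam : M → ProbabilityMeasure H)
    (hlam_fiber : ∀ m : M, ((lam m : Measure H)).map B.proj = Measure.dirac m)
    (hlam_inv : ∀ x : H,
      ((lam (B.proj x) : Measure H)).map
          (fun y => if B.proj y = B.proj x then B.mul x y else y) =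
        (lam (B.proj x) : Measure H))
    (f : C(H, ℂ)) :
    LowerSemicontinuous fun m : M =>
      sSup {r : ℝ | ∃ h k : C(H, ℂ),
        (∫ x, ‖h x‖ ^ 2 ∂(lam m : MeasureTheory.Measure H)) ≤ 1 ∧
        (∫ x, ‖k x‖ ^ 2 ∂(lam m : MeasureTheory.Measure H)) ≤ 1 ∧
        r = ‖∫ x, (∫ y,
            (if B.proj x = B.proj y then h x * f (B.mul (B.inv x) y) * k y else 0)
          ∂(lam m : MeasureTheory.Measure H)) ∂(lam m : MeasureTheory.Measure H)‖} := by
  have hlam : B.IsHaarSystem lam := ⟨hlam_fiber, hlam_inv⟩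
  refine lowerSemicontinuous_sSup_of_forall_exists_continuousAt
    (fun m => ⟨‖f‖, ?_⟩) (fun m => ⟨0, 0, 0, by simp, by simp, by simp⟩) ?_
  · rintro _ ⟨h, k, hh, hk, rfl⟩
    exact B.norm_pairing_le lam f hh hk
  rintro m₀ _ ⟨h, k, hh, hk, rfl⟩
  let a m := l2Normalizer (lam m : Measure H) h
  let b m := l2Normalizer (lam m : Measure H) k
  refine ⟨fun m => a m * b m * ‖B.pairing lam f h k m‖,
    (((hlam.continuous_l2Normalizer hopen h).mul (hlam.continuous_l2Normalizer hopen k)).mul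
      (hlam.continuous_pairing hopen f h k).norm).continuousAt, ?_,
    .of_forall fun m => ⟨a m • h, b m • k, integral_norm_sq_l2Normalizer_smul_le_one _ _,
      integral_norm_sq_l2Normalizer_smul_le_one _ _, ?_⟩⟩
  · simp [a, b, l2Normalizer_eq_one _ hh, l2Normalizer_eq_one _ hk, CompactGroupBundle.pairing]
  · exact (B.norm_pairing_smul_smul lam f h k (l2Normalizer_nonneg _ _)
      (l2Normalizer_nonneg _ _) m).symm

/-- Let `p : H → M` be an *open* compact group bundle over a compact Hausdorff space,
with (normalized) fiber Haar measures `m ↦ λ_{H_m}`, and let `f ∈ C(H)`. Then the map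
`m ↦ ‖f|_{H_m}‖_{C*(H_m)}` is lower semicontinuous, where (compact groups being
amenable) the group C*-algebra norm of `f|_{H_m}` is given by the reduced formula
`sup { |∬_{H_m × H_m} h(x) f(x⁻¹y) k(y) dλ_{H_m}(x) dλ_{H_m}(y)| :
h, k continuous, ‖h‖_{L²(H_m)} ≤ 1, ‖k‖_{L²(H_m)} ≤ 1 }`. -/
theorem lowerSemicontinuous_fiberwise_CStar_norm
    {H M : Type*} [TopologicalSpace H] [CompactSpace H] [T2Space H]
    [MeasurableSpace H] [BorelSpace H]
    [TopologicalSpace M] [CompactSpace M] [T2Space M]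
    [MeasurableSpace M] [BorelSpace M]
    (B : CompactGroupBundle H M) (hopen : IsOpenMap B.proj)
    (lam : M → ProbabilityMeasure H)
    (hlam_fiber : ∀ m : M, ((lam m : Measure H)).map B.proj = Measure.dirac m)
    (hlam_reg : ∀ m : M, (lam m : Measure H).Regular)
    (hlam_inv : ∀ x : H,
      ((lam (B.proj x) : Measure H)).map
          (fun y => if B.proj y = B.proj x then B.mul x y else y) =
        (lam (B.proj x) : Measure H))
    (f : C(H, ℂ)) :
    LowerSemicontinuous fun m : M =>
      sSup {r : ℝ | ∃ h k : C(H, ℂ),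
        (∫ x, ‖h x‖ ^ 2 ∂(lam m : MeasureTheory.Measure H)) ≤ 1 ∧
        (∫ x, ‖k x‖ ^ 2 ∂(lam m : MeasureTheory.Measure H)) ≤ 1 ∧
        r = ‖∫ x, (∫ y,
            (if B.proj x = B.proj y then h x * f (B.mul (B.inv x) y) * k y else 0)
          ∂(lam m : MeasureTheory.Measure H)) ∂(lam m : MeasureTheory.Measure H)‖} :=
  lowerSemicontinuous_fiberwise_CStar_norm_general B hopen lam hlam_fiber hlam_inv f
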